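/- Under the same hypotheses (relations (3.4), (3.8) between (x_n, y_n) and (a_n², b_n), the Toda equations c(a_n²)' = a_n²(b_n - b_{n-1}), c b_n' = a_{n+1}² - a_n², and a_0² = 0), the derivative of y_n satisfies (1-c)y_n' = ((1-c)²/c²)·a_n²·(x_n - x_{n-1}) for all n ≥ 1. -/

import Mathlib

/-!
Since `b_n = x_n + r_n` with `r_n' = (2n+α+β-γ)/(1-c)²`, the second Toda equation gives
`c x_k' = a_{k+1}² - a_k² - c r_k'`, which telescopes (with `a_0² = 0`) to
`c Σ_{k<n} x_k' = a_n² - c n(n+α+β-γ-1)/(1-c)²`. Differentiating the definition of `y_n`, this sum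
cancels the derivative of the term `n(n+α+β-γ-1)/(1-c)`, and the first Toda equation, rewritten
as `c (a_n²)' = a_n² (x_n - x_{n-1} + (1+c)/(1-c))`, finishes the computation.
-/

open Set

theorem hasDerivAt_affine_div_one_sub (p q : ℝ) {c : ℝ} (hc : c ≠ 1) :
    HasDerivAt (fun t => (p + q * t) / (1 - t)) ((p + q) / (1 - c) ^ 2) c := by
  have hnum : HasDerivAt (fun t => p + q * t) q c := by
    simpa using ((hasDerivAt_id c).const_mul q).const_add p
  have hden : HasDerivAt (fun t : ℝ => 1 - t) (-1) c := by
    simpa using (hasDerivAt_id c).const_sub 1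
  exact (hnum.fun_div hden (sub_ne_zero.2 hc.symm)).congr_deriv (by ring)

theorem sum_range_two_mul_add (s : ℝ) (N : ℕ) :
    ∑ k ∈ Finset.range N, (2 * (k : ℝ) + s) = N * (N + s - 1) := by
  induction N with
  | zero => simp
  | succ N ih =>
    rw [Finset.sum_range_succ, ih]
    push_cast
    ring

section Toda

variable {α β γ c : ℝ} {x y a2 b : ℕ → ℝ → ℝ}

theorem mul_deriv_x_eq
    (hdx : ∀ n, ∀ c ∈ Ioo (0:ℝ) 1, DifferentiableAt ℝ (x n) c)
    (hb : ∀ n : ℕ, ∀ c ∈ Ioo (0:ℝ) 1,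
      b n c = x n c + ((n : ℝ) + ((n : ℝ) + α + β) * c - γ) / (1 - c))
    (hToda2 : ∀ n : ℕ, ∀ c ∈ Ioo (0:ℝ) 1,
      c * deriv (b n) c = a2 (n + 1) c - a2 n c)
    (k : ℕ) (hc : c ∈ Ioo (0:ℝ) 1) :
    c * deriv (x k) c = a2 (k + 1) c - a2 k c - c * (2 * k + α + β - γ) / (1 - c) ^ 2 := by
  have hr := hasDerivAt_affine_div_one_sub ((k : ℝ) - γ) ((k : ℝ) + α + β) hc.2.ne
  have hbx : b k =ᶠ[nhds c] fun t => x k t + ((k - γ) + (k + α + β) * t) / (1 - t) := by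
    filter_upwards [isOpen_Ioo.mem_nhds hc] with t ht
    rw [hb k t ht]
    ring
  have hderiv := ((hdx k c hc).hasDerivAt.add hr).congr_of_eventuallyEq hbx
  have htoda := hToda2 k c hc
  rw [hderiv.deriv] at htoda
  linear_combination htoda

theorem mul_sum_deriv_x_eq
    (hdx : ∀ n, ∀ c ∈ Ioo (0:ℝ) 1, DifferentiableAt ℝ (x n) c)
    (hb : ∀ n : ℕ, ∀ c ∈ Ioo (0:ℝ) 1,
      b n c = x n c + ((n : ℝ) + ((n : ℝ) + α + β) * c - γ) / (1 - c))
    (hToda2 : ∀ n : ℕ, ∀ c ∈ Ioo (0:ℝ) 1,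
      c * deriv (b n) c = a2 (n + 1) c - a2 n c)
    (ha0 : ∀ c ∈ Ioo (0:ℝ) 1, a2 0 c = 0) (n : ℕ) (hc : c ∈ Ioo (0:ℝ) 1) :
    c * ∑ k ∈ Finset.range n, deriv (x k) c
      = a2 n c - c * (n * (n + α + β - γ - 1)) / (1 - c) ^ 2 := by
  have hgauss := sum_range_two_mul_add (α + β - γ) n
  simp only [← add_assoc, ← add_sub_assoc] at hgauss
  rw [Finset.mul_sum, Finset.sum_congr rfl fun k _ => mul_deriv_x_eq hdx hb hToda2 k hc,
    Finset.sum_sub_distrib, Finset.sum_range_sub (fun k => a2 k c), ha0 c hc,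
    ← Finset.sum_div, ← Finset.mul_sum, hgauss, sub_zero]

theorem hasDerivAt_y
    (hdx : ∀ n, ∀ c ∈ Ioo (0:ℝ) 1, DifferentiableAt ℝ (x n) c)
    (hda : ∀ n, ∀ c ∈ Ioo (0:ℝ) 1, DifferentiableAt ℝ (a2 n) c)
    (ha : ∀ n : ℕ, ∀ c ∈ Ioo (0:ℝ) 1,
      (1 - c) / c * a2 n c = y n c + (∑ k ∈ Finset.range n, x k c)
        + (n : ℝ) * ((n : ℝ) + α + β - γ - 1) / (1 - c))
    (n : ℕ) (hc : c ∈ Ioo (0:ℝ) 1) :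
    HasDerivAt (y n)
      (-(a2 n c / c ^ 2) + (1 - c) / c * deriv (a2 n) c
        - ∑ k ∈ Finset.range n, deriv (x k) c
        - n * (n + α + β - γ - 1) / (1 - c) ^ 2) c := by
  set K : ℝ := n * (n + α + β - γ - 1)
  have hcoef : HasDerivAt (fun t : ℝ => (1 - t) / t) (-(1 / c ^ 2)) c := by
    refine (((hasDerivAt_id' c).const_sub 1).fun_div (hasDerivAt_id' c) hc.1.ne').congr_deriv ?_
    field_simp
    ring
  have hK : HasDerivAt (fun t => K / (1 - t)) (K / (1 - c) ^ 2) c := by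
    simpa using hasDerivAt_affine_div_one_sub K 0 hc.2.ne
  have hsum : HasDerivAt (fun t => ∑ k ∈ Finset.range n, x k t)
      (∑ k ∈ Finset.range n, deriv (x k) c) c :=
    HasDerivAt.fun_sum fun k _ => (hdx k c hc).hasDerivAt
  have hy : y n =ᶠ[nhds c]
      fun t => (1 - t) / t * a2 n t - ∑ k ∈ Finset.range n, x k t - K / (1 - t) := by
    filter_upwards [isOpen_Ioo.mem_nhds hc] with t ht
    rw [ha n t ht]
    ring
  refine (((hcoef.fun_mul (hda n c hc).hasDerivAt).fun_sub hsum).fun_sub hK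
    |>.congr_of_eventuallyEq hy).congr_deriv ?_
  ring

end Toda

theorem toda_for_y_general (α β γ : ℝ) (x y a2 b : ℕ → ℝ → ℝ)
    (hdx : ∀ n, ∀ c ∈ Ioo (0:ℝ) 1, DifferentiableAt ℝ (x n) c)
    (hda : ∀ n, ∀ c ∈ Ioo (0:ℝ) 1, DifferentiableAt ℝ (a2 n) c)
    (hb : ∀ n : ℕ, ∀ c ∈ Ioo (0:ℝ) 1,
      b n c = x n c + ((n : ℝ) + ((n : ℝ) + α + β) * c - γ) / (1 - c))
    (ha : ∀ n : ℕ, ∀ c ∈ Ioo (0:ℝ) 1,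
      (1 - c) / c * a2 n c = y n c + (∑ k ∈ Finset.range n, x k c)
        + (n : ℝ) * ((n : ℝ) + α + β - γ - 1) / (1 - c))
    (hToda1 : ∀ n : ℕ, 1 ≤ n → ∀ c ∈ Ioo (0:ℝ) 1,
      c * deriv (a2 n) c = a2 n c * (b n c - b (n - 1) c))
    (hToda2 : ∀ n : ℕ, ∀ c ∈ Ioo (0:ℝ) 1,
      c * deriv (b n) c = a2 (n + 1) c - a2 n c)
    (ha0 : ∀ c ∈ Ioo (0:ℝ) 1, a2 0 c = 0) :
    ∀ n : ℕ, 1 ≤ n → ∀ c ∈ Ioo (0:ℝ) 1,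
      (1 - c) * deriv (y n) c = (1 - c) ^ 2 / c ^ 2 * a2 n c * (x n c - x (n - 1) c) := by
  intro n hn c hc
  have hc0 : c ≠ 0 := hc.1.ne'
  have hc1 : 1 - c ≠ 0 := (sub_pos.2 hc.2).ne'
  have hsum := mul_sum_deriv_x_eq hdx hb hToda2 ha0 n hc
  have hΔb : b n c - b (n - 1) c = x n c - x (n - 1) c + (1 + c) / (1 - c) := by
    rw [hb n c hc, hb (n - 1) c hc, Nat.cast_pred hn]
    field_simp
    ring
  have hToda1x := hToda1 n hn c hc
  rw [hΔb] at hToda1x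
  rw [(hasDerivAt_y hdx hda ha n hc).deriv]
  linear_combination (norm := skip)
    (1 - c) ^ 2 / c ^ 2 * hToda1x - (1 - c) / c * hsum
  field_simp
  ring

/-- Proposition 5.1, eq. (5.6): the Toda equation for y_n. -/
theorem toda_for_y (α β γ : ℝ) (x y a2 b : ℕ → ℝ → ℝ)
    (hdx : ∀ n, ∀ c ∈ Ioo (0:ℝ) 1, DifferentiableAt ℝ (x n) c)
    (hdy : ∀ n, ∀ c ∈ Ioo (0:ℝ) 1, DifferentiableAt ℝ (y n) c)
    (hda : ∀ n, ∀ c ∈ Ioo (0:ℝ) 1, DifferentiableAt ℝ (a2 n) c)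
    (hdb : ∀ n, ∀ c ∈ Ioo (0:ℝ) 1, DifferentiableAt ℝ (b n) c)
    (hb : ∀ n : ℕ, ∀ c ∈ Ioo (0:ℝ) 1,
      b n c = x n c + ((n : ℝ) + ((n : ℝ) + α + β) * c - γ) / (1 - c))
    (ha : ∀ n : ℕ, ∀ c ∈ Ioo (0:ℝ) 1,
      (1 - c) / c * a2 n c = y n c + (∑ k ∈ Finset.range n, x k c)
        + (n : ℝ) * ((n : ℝ) + α + β - γ - 1) / (1 - c))
    (hToda1 : ∀ n : ℕ, 1 ≤ n → ∀ c ∈ Ioo (0:ℝ) 1,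
      c * deriv (a2 n) c = a2 n c * (b n c - b (n - 1) c))
    (hToda2 : ∀ n : ℕ, ∀ c ∈ Ioo (0:ℝ) 1,
      c * deriv (b n) c = a2 (n + 1) c - a2 n c)
    (ha0 : ∀ c ∈ Ioo (0:ℝ) 1, a2 0 c = 0) :
    ∀ n : ℕ, 1 ≤ n → ∀ c ∈ Ioo (0:ℝ) 1,
      (1 - c) * deriv (y n) c = (1 - c) ^ 2 / c ^ 2 * a2 n c * (x n c - x (n - 1) c) :=
  toda_for_y_general α β γ x y a2 b hdx hda hb ha hToda1 hToda2 ha0
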